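/- Let C be a dyadic cell at level ℓ and let j ≥ ℓ be an integer. The number of dyadic cells Z at level j for which there exists an axis-aligned square γ with storing cell Z, side length side(γ) ≥ side(C), and such that 5C intersects the boundary of γ, is at most 121. -/
import Mathlib


open Set

/-- A dyadic cell at level `level` (side length `2^level`) with lower-left corner
`(a·2^level, b·2^level)`. -/
structure DyadicCell where
  level : ℤ
  a : ℤ
  b : ℤ
deriving DecidableEq

/-- The side length of a dyadic cell. -/
noncomputable def DyadicCell.side (C : DyadicCell) : ℝ := 2 ^ C.level

/-- The dyadic cell as a subset of the plane. -/
noncomputable def DyadicCell.toSet (C : DyadicCell) : Set (ℝ × ℝ) :=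
  Set.Icc ((C.a : ℝ) * 2 ^ C.level) ((C.a + 1 : ℝ) * 2 ^ C.level) ×ˢ
    Set.Icc ((C.b : ℝ) * 2 ^ C.level) ((C.b + 1 : ℝ) * 2 ^ C.level)

/-- `5C`: the square obtained by scaling the cell `C` by a factor `5` about its center. -/
noncomputable def DyadicCell.scale5 (C : DyadicCell) : Set (ℝ × ℝ) :=
  Set.Icc ((C.a - 2 : ℝ) * 2 ^ C.level) ((C.a + 3 : ℝ) * 2 ^ C.level) ×ˢ
    Set.Icc ((C.b - 2 : ℝ) * 2 ^ C.level) ((C.b + 3 : ℝ) * 2 ^ C.level)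

/-- An axis-aligned square `[x, x+s] × [y, y+s]` of side length `s > 0`. -/
structure Square where
  x : ℝ
  y : ℝ
  s : ℝ
  s_pos : 0 < s

/-- The square as a subset of the plane. -/
noncomputable def Square.toSet (σ : Square) : Set (ℝ × ℝ) :=
  Set.Icc σ.x (σ.x + σ.s) ×ˢ Set.Icc σ.y (σ.y + σ.s)

/-- The center of a square. -/
noncomputable def Square.center (σ : Square) : ℝ × ℝ := (σ.x + σ.s / 2, σ.y + σ.s / 2)

/-- `C` is a storing cell of `σ`: a dyadic cell of maximal side length among those that
contain the center of `σ` and are contained in `σ`. -/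
def IsStoringCell (σ : Square) (C : DyadicCell) : Prop :=
  σ.center ∈ C.toSet ∧ C.toSet ⊆ σ.toSet ∧
    ∀ D : DyadicCell, σ.center ∈ D.toSet → D.toSet ⊆ σ.toSet → D.side ≤ C.side

/-- 1D floor-cell facts. -/
lemma floor_cell (c q : ℝ) (hq : 0 < q) :
    (⌊c / q⌋ : ℝ) * q ≤ c ∧ c ≤ ((⌊c / q⌋ : ℝ) + 1) * q := by
  constructor
  · have h := Int.floor_le (c / q)
    have : (⌊c / q⌋ : ℝ) * q ≤ (c / q) * q := by nlinarith
    rwa [div_mul_cancel₀ c hq.ne'] at this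
  · have h := Int.lt_floor_add_one (c / q)
    have : (c / q) * q ≤ ((⌊c / q⌋ : ℝ) + 1) * q := by nlinarith
    rwa [div_mul_cancel₀ c hq.ne'] at this

/-- The side of a storing cell is at least a quarter of the side of the square. -/
lemma storing_s_le (γ : Square) (Z : DyadicCell) (h : IsStoringCell γ Z) :
    γ.s ≤ 4 * 2 ^ Z.level := by
  have hs2 : (0:ℝ) < γ.s / 2 := by linarith [γ.s_pos]
  set k : ℤ := Int.log 2 (γ.s / 2) with hk
  have hk1 : (2:ℝ) ^ k ≤ γ.s / 2 := by
    have := Int.zpow_log_le_self (b := 2) (R := ℝ) one_lt_two hs2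
    exact_mod_cast this
  have hk2 : γ.s / 2 < 2 ^ (k + 1) := by
    have := Int.lt_zpow_succ_log_self (b := 2) (R := ℝ) one_lt_two (γ.s / 2)
    exact_mod_cast this
  have hqk : (0:ℝ) < 2 ^ k := zpow_pos two_pos k
  set c1 : ℝ := γ.x + γ.s / 2 with hc1
  set c2 : ℝ := γ.y + γ.s / 2 with hc2
  have hcen : γ.center = (c1, c2) := rfl
  set D : DyadicCell := ⟨k, ⌊c1 / 2 ^ k⌋, ⌊c2 / 2 ^ k⌋⟩ with hD
  obtain ⟨hf1l, hf1r⟩ := floor_cell c1 (2 ^ k) hqk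
  obtain ⟨hf2l, hf2r⟩ := floor_cell c2 (2 ^ k) hqk
  have hmem : γ.center ∈ D.toSet := by
    rw [hcen]
    exact ⟨⟨hf1l, hf1r⟩, ⟨hf2l, hf2r⟩⟩
  have hsubγ : D.toSet ⊆ γ.toSet := by
    apply Set.prod_mono <;> apply Set.Icc_subset_Icc <;> simp only [hD] <;> nlinarith
  have hmax := h.2.2 D hmem hsubγ
  have : (2:ℝ) ^ k ≤ 2 ^ Z.level := hmax
  have h2 : (2:ℝ) ^ (k + 1) = 2 * 2 ^ k := by
    rw [zpow_add_one₀ (two_ne_zero)]; ring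
  nlinarith

/-- 1D counting bound. -/
lemma coord_bound (a za : ℤ) (t q c p s : ℝ) (ht0 : 0 < t) (ht1 : t ≤ 1) (hq : 0 < q)
    (h1 : (za : ℝ) * q ≤ c) (h2 : c ≤ ((za : ℝ) + 1) * q)
    (h3 : ((a : ℝ) - 2) * (t * q) ≤ p) (h4 : p ≤ ((a : ℝ) + 3) * (t * q))
    (h5a : p - s / 2 ≤ c) (h5b : c ≤ p + s / 2) (h6 : s ≤ 4 * q) :
    ⌈((a : ℝ) - 2) * t - 3⌉ ≤ za ∧ za ≤ ⌈((a : ℝ) - 2) * t - 3⌉ + 10 := by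
  set u : ℝ := ((a : ℝ) - 2) * t - 3 with hu
  constructor
  · rw [Int.ceil_le]
    have hmul : u * q ≤ (za : ℝ) * q := by
      have : ((a : ℝ) - 2) * (t * q) - 3 * q ≤ ((za : ℝ) + 1) * q := by nlinarith
      nlinarith
    exact_mod_cast le_of_mul_le_mul_right hmul hq
  · have hmul : (za : ℝ) * q ≤ (((a : ℝ) + 3) * t + 2) * q := by nlinarith
    have hub : (za : ℝ) ≤ ((a : ℝ) + 3) * t + 2 := le_of_mul_le_mul_right hmul hq
    have hceil : u ≤ (⌈u⌉ : ℝ) := Int.le_ceil u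
    have : (za : ℝ) ≤ (⌈u⌉ : ℝ) + 10 := by nlinarith
    exact_mod_cast this

theorem statement8 (C : DyadicCell) (j : ℤ) (hj : C.level ≤ j) :
    {Z : DyadicCell | Z.level = j ∧ ∃ γ : Square, IsStoringCell γ Z ∧
      C.side ≤ γ.s ∧ (C.scale5 ∩ frontier γ.toSet).Nonempty}.encard ≤ 121 := by
  classical
  set q : ℝ := 2 ^ j with hq'
  have hq : 0 < q := zpow_pos two_pos j
  set t : ℝ := 2 ^ (C.level - j) with ht'
  have ht0 : 0 < t := zpow_pos two_pos _
  have ht1 : t ≤ 1 := zpow_le_one_of_nonpos₀ (by norm_num) (by omega)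
  have htq : (2:ℝ) ^ C.level = t * q := by
    rw [ht', hq', ← zpow_add₀ (two_ne_zero (α := ℝ))]
    congr 1; ring
  set A₀ := ⌈((C.a : ℝ) - 2) * t - 3⌉ with hA
  set B₀ := ⌈((C.b : ℝ) - 2) * t - 3⌉ with hB
  set F : Finset DyadicCell :=
    ((Finset.Icc A₀ (A₀ + 10)) ×ˢ (Finset.Icc B₀ (B₀ + 10))).image
      (fun p : ℤ × ℤ => DyadicCell.mk j p.1 p.2) with hF
  have hsub : {Z : DyadicCell | Z.level = j ∧ ∃ γ : Square, IsStoringCell γ Z ∧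
      C.side ≤ γ.s ∧ (C.scale5 ∩ frontier γ.toSet).Nonempty} ⊆ ↑F := by
    rintro ⟨zl, za, zb⟩ ⟨hZl, γ, hst, hside, p, hp5, hpf⟩
    simp only at hZl
    subst hZl
    have hpγ : p ∈ γ.toSet := (isClosed_Icc.prod isClosed_Icc).frontier_subset hpf
    obtain ⟨⟨hpx1, hpx2⟩, hpy1, hpy2⟩ := hpγ
    obtain ⟨⟨hp5x1, hp5x2⟩, hp5y1, hp5y2⟩ := hp5
    obtain ⟨⟨hcx1, hcx2⟩, hcy1, hcy2⟩ := hst.1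
    rw [htq] at hp5x1 hp5x2 hp5y1 hp5y2
    have hs4 : γ.s ≤ 4 * q := by
      have := storing_s_le γ _ hst
      simpa [hq'] using this
    have hc1 : γ.center.1 = γ.x + γ.s / 2 := rfl
    have hc2 : γ.center.2 = γ.y + γ.s / 2 := rfl
    have hbx := coord_bound C.a za t q γ.center.1 p.1 γ.s ht0 ht1 hq
      hcx1 hcx2 hp5x1 hp5x2 (by rw [hc1]; linarith)
      (by rw [hc1]; linarith) hs4
    have hby := coord_bound C.b zb t q γ.center.2 p.2 γ.s ht0 ht1 hq
      hcy1 hcy2 hp5y1 hp5y2 (by rw [hc2]; linarith) (by rw [hc2]; linarith) hs4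
    simp only [hF, Finset.coe_image, Set.mem_image, Finset.mem_coe, Finset.mem_product,
      Finset.mem_Icc]
    exact ⟨(za, zb), ⟨⟨hbx.1, hbx.2⟩, ⟨hby.1, hby.2⟩⟩, rfl⟩
  calc {Z : DyadicCell | Z.level = j ∧ ∃ γ : Square, IsStoringCell γ Z ∧
      C.side ≤ γ.s ∧ (C.scale5 ∩ frontier γ.toSet).Nonempty}.encard
      ≤ (↑F : Set DyadicCell).encard := Set.encard_le_encard hsub
    _ = (F.card : ℕ∞) := Set.encard_coe_eq_coe_finsetCard F
    _ ≤ 121 := by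
        have : F.card ≤ 121 := by
          refine Finset.card_image_le.trans ?_
          rw [Finset.card_product, Int.card_Icc, Int.card_Icc,
            (by omega : A₀ + 10 + 1 - A₀ = 11), (by omega : B₀ + 10 + 1 - B₀ = 11)]
          decide
        exact_mod_cast this
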